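/- arXiv:1010.2032 — 2 statements merged into one kernel-verified Lean document; each statement's English description precedes it below -/
import Mathlib

section
/- Let ω be any nonempty finite word and let ε > 0 satisfy ε ≤ R r_ω. Then the ε-parallel set of the cylinder set S_ω(F) decomposes as (S_ω F)_ε = ⋃_{σ̃ ∈ Σ(ε/r_ω)} (S_ω(S_σ̃(F)))_ε. -/
open Set Metric

/-- The contraction ratio `r_ω` of a finite word `ω` over the alphabet `Fin N`. -/
def rword {N : ℕ} (r : Fin N → ℝ) (ω : List (Fin N)) : ℝ := (ω.map r).prod

/-- The family `Σ(ε)` of all nonempty words `ω` with `R r_ω < ε ≤ R r_{ω|(|ω|-1)}`. -/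
def SigmaW {N : ℕ} (r : Fin N → ℝ) (R ε : ℝ) : Set (List (Fin N)) :=
  {ω | ω ≠ [] ∧ R * rword r ω < ε ∧ ε ≤ R * rword r (ω.take (ω.length - 1))}

/-- The composed map `S_ω = S_{ω₁} ∘ ⋯ ∘ S_{ωₙ}` for a word `ω = ω₁…ωₙ`. -/
def Sword {N : ℕ} {E : Type*} (S : Fin N → E → E) (ω : List (Fin N)) : E → E :=
  ω.foldr (fun i f => S i ∘ f) id

/-!
Every point `z` of `F` has an address: `z ∈ S_τ(F)` for words `τ` of every length, obtained by
repeatedly using `F ⊆ ⋃ i, S_i(F)`. Extending the address one letter at a time shrinks `R r_τ`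
geometrically, so it drops below `δ = ε / r_ω` after finitely many steps, and the first word at
which this happens lies in `Σ(δ)`. Hence `F = ⋃_{σ ∈ Σ(δ)} S_σ(F)`, and applying `S_ω` gives the
same decomposition of `S_ω(F)`. Taking `ε`-parallel sets commutes with this union because `S_ω(F)`
is compact: a point at distance `≤ ε` from it is at distance `≤ ε` from one of its points.
-/

theorem IsCompact.cthickening_biUnion {α ι : Type*} [PseudoMetricSpace α] {I : Set ι}
    {A : ι → Set α} (hK : IsCompact (⋃ i ∈ I, A i)) {ε : ℝ} (hε : 0 ≤ ε) :
    cthickening ε (⋃ i ∈ I, A i) = ⋃ i ∈ I, cthickening ε (A i) := by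
  refine Subset.antisymm ?_
    (iUnion₂_subset fun i hi => cthickening_subset_of_subset ε (subset_biUnion_of_mem hi))
  rw [hK.cthickening_eq_biUnion_closedBall hε]
  refine iUnion₂_subset fun y hy x hxy => ?_
  obtain ⟨i, hi, hyi⟩ := mem_iUnion₂.mp hy
  exact mem_biUnion hi (mem_cthickening_of_dist_le x y ε _ hyi hxy)

section Words

variable {N : ℕ}

theorem rword_cons (r : Fin N → ℝ) (i : Fin N) (ω : List (Fin N)) :
    rword r (i :: ω) = r i * rword r ω :=
  List.prod_cons

theorem rword_pos {r : Fin N → ℝ} (hr : ∀ i, 0 < r i) (ω : List (Fin N)) : 0 < rword r ω := by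
  induction ω with
  | nil => exact one_pos
  | cons i ω ih => rw [rword_cons]; exact mul_pos (hr i) ih

theorem append_singleton_mem_sigmaW {r : Fin N → ℝ} {R δ : ℝ} {τ : List (Fin N)} {i : Fin N}
    (hlt : R * rword r (τ ++ [i]) < δ) (hle : δ ≤ R * rword r τ) :
    τ ++ [i] ∈ SigmaW r R δ :=
  ⟨by simp, hlt, by simpa using hle⟩

variable {E : Type*} (S : Fin N → E → E)

theorem sword_cons (i : Fin N) (ω : List (Fin N)) : Sword S (i :: ω) = S i ∘ Sword S ω :=
  rfl

theorem sword_append (σ τ : List (Fin N)) : Sword S (σ ++ τ) = Sword S σ ∘ Sword S τ := by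
  induction σ with
  | nil => rfl
  | cons i σ ih => rw [List.cons_append, sword_cons, sword_cons, ih, Function.comp_assoc]

theorem sword_image_subset {F : Set E} (hF : ⋃ i, S i '' F ⊆ F) (σ : List (Fin N)) :
    Sword S σ '' F ⊆ F := by
  induction σ with
  | nil => simp [Sword]
  | cons i σ ih =>
    rw [sword_cons, image_comp]
    exact (image_mono ih).trans ((subset_iUnion (fun j => S j '' F) i).trans hF)

theorem sword_image_subset_iUnion_append {F : Set E} (hF : F ⊆ ⋃ i, S i '' F)
    (τ : List (Fin N)) : Sword S τ '' F ⊆ ⋃ i, Sword S (τ ++ [i]) '' F := by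
  simp_rw [sword_append, image_comp, ← image_iUnion]
  exact image_mono (by simpa [Sword] using hF)

theorem continuous_sword [TopologicalSpace E] {S : Fin N → E → E} (hS : ∀ i, Continuous (S i))
    (ω : List (Fin N)) : Continuous (Sword S ω) := by
  induction ω with
  | nil => exact continuous_id
  | cons i ω ih => exact (hS i).comp ih

end Words

section Cover

variable {N : ℕ} {E : Type*} {S : Fin N → E → E} {F : Set E} {r : Fin N → ℝ} {R δ c : ℝ}

theorem exists_mem_sigmaW_of_mem_sword_image (hF : F ⊆ ⋃ i, S i '' F) (hc0 : 0 ≤ c)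
    (hc : ∀ i, r i ≤ c) (hδ : 0 < δ) (n : ℕ) {τ : List (Fin N)} (hτ : δ ≤ R * rword r τ)
    (hn : R * rword r τ * c ^ n < δ) {z : E} (hz : z ∈ Sword S τ '' F) :
    ∃ σ ∈ SigmaW r R δ, z ∈ Sword S σ '' F := by
  induction n generalizing τ with
  | zero => simp at hn; linarith
  | succ n ih =>
    obtain ⟨i, hzi⟩ := mem_iUnion.mp (sword_image_subset_iUnion_append S hF τ hz)
    by_cases hlt : R * rword r (τ ++ [i]) < δ
    · exact ⟨τ ++ [i], append_singleton_mem_sigmaW hlt hτ, hzi⟩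
    refine ih (not_lt.mp hlt) ?_ hzi
    calc R * rword r (τ ++ [i]) * c ^ n = R * rword r τ * r i * c ^ n := by
          simp [rword, mul_assoc]
      _ ≤ R * rword r τ * c * c ^ n := by
          have : 0 ≤ R * rword r τ := hδ.le.trans hτ
          gcongr
          exact hc i
      _ = R * rword r τ * c ^ (n + 1) := by ring
      _ < δ := hn

theorem exists_nonneg_lt_one_forall_le {ι : Type*} [Fintype ι] {f : ι → ℝ} (hf : ∀ i, f i < 1) :
    ∃ c, 0 ≤ c ∧ c < 1 ∧ ∀ i, f i ≤ c := by
  classical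
  let s := insert 0 (Finset.univ.image f)
  refine ⟨s.max' (Finset.insert_nonempty _ _), s.le_max' 0 (Finset.mem_insert_self _ _), ?_,
    fun i => s.le_max' (f i) (by simp [s])⟩
  rw [Finset.max'_lt_iff]
  simpa [s] using hf

theorem eq_biUnion_sword_image_sigmaW (hF : F = ⋃ i, S i '' F) (hr : ∀ i, r i < 1)
    (hR : 0 < R) (hδ : 0 < δ) (hδR : δ ≤ R) :
    F = ⋃ σ ∈ SigmaW r R δ, Sword S σ '' F := by
  refine Subset.antisymm (fun z hz => ?_) (iUnion₂_subset fun σ _ => sword_image_subset S hF.ge σ)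
  obtain ⟨c, hc0, hc1, hc⟩ := exists_nonneg_lt_one_forall_le hr
  obtain ⟨n, hn⟩ := exists_pow_lt_of_lt_one (div_pos hδ hR) hc1
  have hroot : R * rword r [] * c ^ n < δ := by
    rw [lt_div_iff₀ hR] at hn
    simpa [rword, mul_comm] using hn
  obtain ⟨σ, hσ, hzσ⟩ := exists_mem_sigmaW_of_mem_sword_image hF.le hc0 hc hδ n
    (by simpa [rword] using hδR) hroot (by simpa [Sword] using hz)
  exact mem_biUnion hσ hzσ

end Cover

theorem stmt5_general {d N : ℕ} (r : Fin N → ℝ)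
    (hr : ∀ i, r i ∈ Set.Ioo (0 : ℝ) 1) (R : ℝ) (hR : 0 < R)
    (S : Fin N → EuclideanSpace ℝ (Fin d) → EuclideanSpace ℝ (Fin d))
    (hSdist : ∀ i x y, dist (S i x) (S i y) = r i * dist x y)
    (F : Set (EuclideanSpace ℝ (Fin d))) (hFcpt : IsCompact F)
    (hF : F = ⋃ i, S i '' F)
    (ω : List (Fin N))
    (ε : ℝ) (hε : 0 < ε) (hεω : ε ≤ R * rword r ω) :
    cthickening ε (Sword S ω '' F) =
      ⋃ σt ∈ SigmaW r R (ε / rword r ω),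
        cthickening ε (Sword S ω '' (Sword S σt '' F)) := by
  have hrω : 0 < rword r ω := rword_pos (fun i => (hr i).1) ω
  have hδR : ε / rword r ω ≤ R := (div_le_iff₀ hrω).mpr hεω
  have hcyl : Sword S ω '' F =
      ⋃ σ ∈ SigmaW r R (ε / rword r ω), Sword S ω '' (Sword S σ '' F) := by
    conv_lhs => rw [eq_biUnion_sword_image_sigmaW hF (fun i => (hr i).2) hR (div_pos hε hrω) hδR]
    rw [image_iUnion₂]
  have hcpt : IsCompact (Sword S ω '' F) :=
    hFcpt.image (continuous_sword (fun i => (LipschitzWith.of_dist_le' fun x y =>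
      (hSdist i x y).le).continuous) ω)
  rw [hcyl] at hcpt ⊢
  exact hcpt.cthickening_biUnion hε.le

/-- For a nonempty word `ω` and `0 < ε ≤ R r_ω`, the `ε`-parallel set of the cylinder
set `S_ω(F)` decomposes as `(S_ω F)_ε = ⋃_{σ̃ ∈ Σ(ε/r_ω)} (S_ω(S_σ̃(F)))_ε`. -/
theorem stmt5 {d N : ℕ} (hN : 2 ≤ N) (r : Fin N → ℝ)
    (hr : ∀ i, r i ∈ Set.Ioo (0 : ℝ) 1) (D : ℝ) (hD0 : 0 ≤ D)
    (hD : ∑ i, r i ^ D = 1) (R : ℝ) (hR : 0 < R)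
    (S : Fin N → EuclideanSpace ℝ (Fin d) → EuclideanSpace ℝ (Fin d))
    (hSsurj : ∀ i, Function.Surjective (S i))
    (hSdist : ∀ i x y, dist (S i x) (S i y) = r i * dist x y)
    (F : Set (EuclideanSpace ℝ (Fin d))) (hFne : F.Nonempty) (hFcpt : IsCompact F)
    (hF : F = ⋃ i, S i '' F)
    (ω : List (Fin N)) (hω : ω ≠ [])
    (ε : ℝ) (hε : 0 < ε) (hεω : ε ≤ R * rword r ω) :
    cthickening ε (Sword S ω '' F) =
      ⋃ σt ∈ SigmaW r R (ε / rword r ω),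
        cthickening ε (Sword S ω '' (Sword S σt '' F)) :=
  stmt5_general r hr R hR S hSdist F hFcpt hF ω ε hε hεω
end

section
/- For every natural number n there exists u > g/2 such that for every ε ∈ (g/2, u), the intersection (S_1 F)_ε ∩ (S_2 F)_ε has at least n connected components (equivalently, it contains n points that pairwise lie in different connected components of the intersection). In particular, the number of connected components of (S_1 F)_ε ∩ (S_2 F)_ε is unbounded as ε decreases to g/2. -/
open Set Metric

/-- The Cantor square `F = C × C ⊆ ℝ²`. -/
def cantorSquare (C : Set ℝ) : Set (EuclideanSpace ℝ (Fin 2)) :=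
  {v | v 0 ∈ C ∧ v 1 ∈ C}

/-- The map `S₁(v) = p·v` on ℝ². -/
noncomputable def cantorS₁ (p : ℝ) (v : EuclideanSpace ℝ (Fin 2)) :
    EuclideanSpace ℝ (Fin 2) := p • v

/-- The map `S₂(v) = p·v + (1−p, 0)` on ℝ². -/
noncomputable def cantorS₂ (p : ℝ) (v : EuclideanSpace ℝ (Fin 2)) :
    EuclideanSpace ℝ (Fin 2) := p • v + EuclideanSpace.single 0 (1 - p)

/-!
A point `z` of `(S₁F)_ε ∩ (S₂F)_ε` is `ε`-close to a point of `S₁F`, with first coordinate at most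
`p`, and to a point of `S₂F`, with first coordinate at least `1 - p`; both have second coordinate
in `pC`. So `dist(z₂, pC)² + (g/2)² ≤ ε²`. For `ε ≥ g/2` the points `(1/2, p(1 - pⁱ))`, `i < n`,
lie in the intersection, and between the `i`-th and the next ones the horizontal line at height
`p(1 - pⁱ/2)` runs through the middle of a gap of `pC` of length `p^(i+1) g`. When
`ε² < (g/2)² + (pⁿ g/2)²` that line misses the intersection and separates the points.
-/

theorem connectedComponentIn_ne_of_forall_ne {X α : Type*} [TopologicalSpace X] [LinearOrder α]
    [TopologicalSpace α] [OrderClosedTopology α] {T : Set X} {f : X → α} (hf : ContinuousOn f T)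
    {a b : X} (ha : a ∈ T) (hb : b ∈ T) {c : α} (hac : f a ≤ c) (hcb : c ≤ f b)
    (hT : ∀ z ∈ T, f z ≠ c) : connectedComponentIn T a ≠ connectedComponentIn T b := by
  intro hab
  have hbK : b ∈ connectedComponentIn T a := hab ▸ mem_connectedComponentIn hb
  have hK : IsPreconnected (f '' connectedComponentIn T a) :=
    isPreconnected_connectedComponentIn.image f (hf.mono (connectedComponentIn_subset T a))
  obtain ⟨z, hzK, hzc⟩ := hK.Icc_subset (mem_image_of_mem f (mem_connectedComponentIn ha))
    (mem_image_of_mem f hbK) ⟨hac, hcb⟩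
  exact hT z (connectedComponentIn_subset T a hzK) hzc

namespace EuclideanSpace

lemma sq_dist_fin_two (z w : EuclideanSpace ℝ (Fin 2)) :
    dist z w ^ 2 = (z 0 - w 0) ^ 2 + (z 1 - w 1) ^ 2 := by
  rw [EuclideanSpace.dist_eq, Real.sq_sqrt (by positivity), Fin.sum_univ_two, Real.dist_eq,
    Real.dist_eq, sq_abs, sq_abs]

lemma sq_infDist_add_sq_le_sq_dist {D : Set ℝ} {z w : EuclideanSpace ℝ (Fin 2)} (hw : w 1 ∈ D)
    {h : ℝ} (hh : 0 ≤ h) (hzw : h ≤ |z 0 - w 0|) : infDist (z 1) D ^ 2 + h ^ 2 ≤ dist z w ^ 2 := by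
  have hD : infDist (z 1) D ≤ |z 1 - w 1| := by
    simpa [Real.dist_eq] using infDist_le_dist_of_mem hw
  rw [sq_dist_fin_two, ← sq_abs (z 0 - w 0), ← sq_abs (z 1 - w 1)]
  nlinarith [infDist_nonneg (x := z 1) (s := D)]

lemma sq_infDist_add_sq_le_of_mem_cthickening_inter {A₁ A₂ : Set (EuclideanSpace ℝ (Fin 2))}
    {D : Set ℝ} {a g ε : ℝ} {z : EuclideanSpace ℝ (Fin 2)} (hA₁ : IsCompact A₁)
    (hA₂ : IsCompact A₂) (h₁ : ∀ w ∈ A₁, w 0 ≤ a ∧ w 1 ∈ D) (h₂ : ∀ w ∈ A₂, a + g ≤ w 0 ∧ w 1 ∈ D)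
    (hg : 0 ≤ g) (hε : 0 ≤ ε) (hz : z ∈ cthickening ε A₁ ∩ cthickening ε A₂) :
    infDist (z 1) D ^ 2 + (g / 2) ^ 2 ≤ ε ^ 2 := by
  rw [hA₁.cthickening_eq_biUnion_closedBall hε, hA₂.cthickening_eq_biUnion_closedBall hε] at hz
  simp only [mem_inter_iff, mem_iUnion₂, mem_closedBall, exists_prop] at hz
  obtain ⟨⟨w₁, hw₁, hzw₁⟩, ⟨w₂, hw₂, hzw₂⟩⟩ := hz
  have key : ∀ w, w 1 ∈ D → g / 2 ≤ |z 0 - w 0| → dist z w ≤ ε →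
      infDist (z 1) D ^ 2 + (g / 2) ^ 2 ≤ ε ^ 2 := fun w hwD hzw hd =>
    (sq_infDist_add_sq_le_sq_dist hwD (by positivity) hzw).trans
      (pow_le_pow_left₀ dist_nonneg hd 2)
  -- `z` is at horizontal distance at least `g / 2` from one of `w₁`, `w₂`
  rcases le_or_gt (z 0) (a + g / 2) with hz0 | hz0
  · exact key w₂ (h₂ w₂ hw₂).2 (le_abs.2 <| .inr <| by linarith [(h₂ w₂ hw₂).1]) hzw₂
  · exact key w₁ (h₁ w₁ hw₁).2 (le_abs.2 <| .inl <| by linarith [(h₁ w₁ hw₁).1]) hzw₁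

end EuclideanSpace

section SelfSimilar

variable {p : ℝ} {C : Set ℝ}

theorem isGreatest_one_of_selfSimilar (hp₀ : 0 ≤ p) (hp₁ : p < 1) (hne : C.Nonempty)
    (hcpt : IsCompact C)
    (hC : C = (fun x => p * x) '' C ∪ (fun x => p * x + (1 - p)) '' C) :
    IsGreatest C 1 := by
  obtain ⟨M, hMC, hMub⟩ := hcpt.exists_isGreatest hne
  have h_le : M ≤ p * M + (1 - p) := by
    have hM := hMC
    rw [hC] at hM
    rcases hM with ⟨y, hy, hyM⟩ | ⟨y, hy, hyM⟩ <;> nlinarith [hMub hy]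
  have h_ge : p * M + (1 - p) ≤ M := hMub <| by rw [hC]; exact Or.inr ⟨M, hMC, rfl⟩
  obtain rfl : M = 1 := by nlinarith
  exact ⟨hMC, hMub⟩

theorem isLeast_zero_of_selfSimilar (hp₀ : 0 ≤ p) (hp₁ : p < 1) (hne : C.Nonempty)
    (hcpt : IsCompact C)
    (hC : C = (fun x => p * x) '' C ∪ (fun x => p * x + (1 - p)) '' C) :
    IsLeast C 0 := by
  obtain ⟨m, hmC, hmlb⟩ := hcpt.exists_isLeast hne
  have h_ge : p * m ≤ m := by
    have hm := hmC
    rw [hC] at hm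
    rcases hm with ⟨y, hy, hym⟩ | ⟨y, hy, hym⟩ <;> nlinarith [hmlb hy]
  have h_le : m ≤ p * m := hmlb <| by rw [hC]; exact Or.inl ⟨m, hmC, rfl⟩
  obtain rfl : m = 0 := by nlinarith
  exact ⟨hmC, hmlb⟩

theorem one_sub_pow_mem_of_selfSimilar (h0 : (0 : ℝ) ∈ C)
    (hC : C = (fun x => p * x) '' C ∪ (fun x => p * x + (1 - p)) '' C) (i : ℕ) :
    1 - p ^ i ∈ C := by
  induction i with
  | zero => simpa using h0
  | succ i ih =>
    rw [hC]
    exact Or.inr ⟨1 - p ^ i, ih, by ring⟩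

/-- The `i`-th gap `(1 - pⁱ(1 - p), 1 - pⁱ⁺¹)` of `C`, with centre `1 - pⁱ/2`, is the image of the
first gap `(p, 1 - p)` under the `i`-th iterate of `x ↦ p * x + (1 - p)`. -/
theorem pow_mul_le_abs_sub_of_selfSimilar (hp₀ : 0 ≤ p) (hp₁ : p ≤ 1) (hsub : C ⊆ Icc 0 1)
    (hC : C = (fun x => p * x) '' C ∪ (fun x => p * x + (1 - p)) '' C) (i : ℕ) :
    ∀ x ∈ C, p ^ i * (1 - 2 * p) / 2 ≤ |x - (1 - p ^ i / 2)| := by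
  have h_left : ∀ i : ℕ, ∀ y ∈ C, p ^ i * (1 - 2 * p) / 2 ≤ |p * y - (1 - p ^ i / 2)| := by
    intro i y hy
    rw [abs_sub_comm]
    refine le_trans ?_ (le_abs_self _)
    have hpi : p ^ i ≤ 1 := pow_le_one₀ hp₀ hp₁
    nlinarith [(hsub hy).2, mul_nonneg (sub_nonneg.2 hp₁) (sub_nonneg.2 hpi)]
  induction i with
  | zero =>
    intro x hx
    rw [hC] at hx
    rcases hx with ⟨y, hy, rfl⟩ | ⟨y, hy, rfl⟩
    · exact h_left 0 y hy
    · refine le_trans ?_ (le_abs_self _)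
      nlinarith [(hsub hy).1]
  | succ i ih =>
    intro x hx
    rw [hC] at hx
    rcases hx with ⟨y, hy, rfl⟩ | ⟨y, hy, rfl⟩
    · exact h_left (i + 1) y hy
    · calc p ^ (i + 1) * (1 - 2 * p) / 2 = p * (p ^ i * (1 - 2 * p) / 2) := by ring
        _ ≤ p * |y - (1 - p ^ i / 2)| := mul_le_mul_of_nonneg_left (ih y hy) hp₀
        _ = |p * (y - (1 - p ^ i / 2))| := by rw [abs_mul, abs_of_nonneg hp₀]
        _ = |p * y + (1 - p) - (1 - p ^ (i + 1) / 2)| := by congr 1; ring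

end SelfSimilar

theorem isCompact_cantorSquare {C : Set ℝ} (hC : IsCompact C) : IsCompact (cantorSquare C) := by
  have : cantorSquare C = (EuclideanSpace.equiv (Fin 2) ℝ) ⁻¹' Set.univ.pi fun _ => C := by
    ext v
    simp [cantorSquare, Fin.forall_fin_two]
  rw [this]
  exact (EuclideanSpace.equiv (Fin 2) ℝ).toHomeomorph.isCompact_preimage.2
    (isCompact_univ_pi fun _ => hC)

@[simp] lemma cantorS₁_apply (p : ℝ) (v : EuclideanSpace ℝ (Fin 2)) (i : Fin 2) :
    cantorS₁ p v i = p * v i := rfl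

@[simp] lemma cantorS₂_apply_zero (p : ℝ) (v : EuclideanSpace ℝ (Fin 2)) :
    cantorS₂ p v 0 = p * v 0 + (1 - p) := by
  simp [cantorS₂]

@[simp] lemma cantorS₂_apply_one (p : ℝ) (v : EuclideanSpace ℝ (Fin 2)) :
    cantorS₂ p v 1 = p * v 1 := by
  simp [cantorS₂]

lemma continuous_cantorS₁ (p : ℝ) : Continuous (cantorS₁ p) := continuous_const_smul p

lemma continuous_cantorS₂ (p : ℝ) : Continuous (cantorS₂ p) :=
  (continuous_const_smul p).add continuous_const

section CantorCopies

variable {p ε : ℝ} {C : Set ℝ}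

theorem pow_succ_mul_le_infDist_image (hp₀ : 0 ≤ p) (hp₁ : p ≤ 1) (hne : C.Nonempty)
    (hsub : C ⊆ Icc 0 1)
    (hC : C = (fun x => p * x) '' C ∪ (fun x => p * x + (1 - p)) '' C) (i : ℕ) :
    p ^ (i + 1) * (1 - 2 * p) / 2 ≤ infDist (p * (1 - p ^ i / 2)) ((fun x => p * x) '' C) := by
  rw [le_infDist (hne.image _)]
  rintro _ ⟨x, hx, rfl⟩
  calc p ^ (i + 1) * (1 - 2 * p) / 2 = p * (p ^ i * (1 - 2 * p) / 2) := by ring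
    _ ≤ p * |x - (1 - p ^ i / 2)| :=
      mul_le_mul_of_nonneg_left (pow_mul_le_abs_sub_of_selfSimilar hp₀ hp₁ hsub hC i x hx) hp₀
    _ = dist (p * (1 - p ^ i / 2)) (p * x) := by
      rw [Real.dist_eq, ← mul_sub, abs_mul, abs_of_nonneg hp₀, abs_sub_comm]

theorem sq_infDist_image_add_sq_le (hp₀ : 0 ≤ p) (hp : p ≤ 1 / 2) (hcpt : IsCompact C)
    (hsub : C ⊆ Icc 0 1) (hε : 0 ≤ ε) {z : EuclideanSpace ℝ (Fin 2)}
    (hz : z ∈ cthickening ε (cantorS₁ p '' cantorSquare C) ∩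
      cthickening ε (cantorS₂ p '' cantorSquare C)) :
    infDist (z 1) ((fun x => p * x) '' C) ^ 2 + ((1 - 2 * p) / 2) ^ 2 ≤ ε ^ 2 := by
  refine EuclideanSpace.sq_infDist_add_sq_le_of_mem_cthickening_inter
    ((isCompact_cantorSquare hcpt).image (continuous_cantorS₁ p))
    ((isCompact_cantorSquare hcpt).image (continuous_cantorS₂ p)) (a := p) ?_ ?_
    (by linarith) hε hz
  · rintro _ ⟨v, ⟨hv₀, hv₁⟩, rfl⟩
    exact ⟨by simpa using mul_le_of_le_one_right hp₀ (hsub hv₀).2, v 1, hv₁, rfl⟩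
  · rintro _ ⟨v, ⟨hv₀, hv₁⟩, rfl⟩
    refine ⟨?_, v 1, hv₁, (cantorS₂_apply_one p v).symm⟩
    simp only [cantorS₂_apply_zero]
    nlinarith [(hsub hv₀).1]

theorem mem_cthickening_inter_of_mem (hp : p ≤ 1 / 2) (h₀ : (0 : ℝ) ∈ C) (h₁ : (1 : ℝ) ∈ C)
    (hε : (1 - 2 * p) / 2 ≤ ε) {c : ℝ} (hc : c ∈ C) :
    !₂[1 / 2, p * c] ∈ cthickening ε (cantorS₁ p '' cantorSquare C) ∩
      cthickening ε (cantorS₂ p '' cantorSquare C) := by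
  have hε₀ : 0 ≤ ε := by linarith
  have hdist : ∀ w : EuclideanSpace ℝ (Fin 2), (1 / 2 - w 0) ^ 2 = ((1 - 2 * p) / 2) ^ 2 →
      w 1 = p * c → dist !₂[1 / 2, p * c] w ≤ ε := by
    intro w hw₀ hw₁
    rw [← sq_le_sq₀ dist_nonneg hε₀, EuclideanSpace.sq_dist_fin_two]
    have e0 : (!₂[1 / 2, p * c] : EuclideanSpace ℝ (Fin 2)) 0 = 1 / 2 := rfl
    have e1 : (!₂[1 / 2, p * c] : EuclideanSpace ℝ (Fin 2)) 1 = p * c := rfl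
    rw [e0, e1, hw₀, hw₁, sub_self]
    nlinarith
  constructor
  · exact mem_cthickening_of_dist_le _ (cantorS₁ p !₂[1, c]) _ _
      (mem_image_of_mem _ ⟨h₁, hc⟩) (hdist _ (by simp; ring) (by simp))
  · exact mem_cthickening_of_dist_le _ (cantorS₂ p !₂[0, c]) _ _
      (mem_image_of_mem _ ⟨h₀, hc⟩) (hdist _ (by simp; ring) (by simp))

theorem connectedComponentIn_cthickening_inter_ne (hp₀ : 0 < p) (hp : p < 1 / 2)
    (hcpt : IsCompact C) (hC₀ : IsLeast C 0) (hC₁ : IsGreatest C 1)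
    (hC : C = (fun x => p * x) '' C ∪ (fun x => p * x + (1 - p)) '' C) {n i j : ℕ}
    (hij : i < j) (hjn : j < n) (hε₁ : (1 - 2 * p) / 2 ≤ ε)
    (hε₂ : ε ^ 2 < ((1 - 2 * p) / 2) ^ 2 + (p ^ n * (1 - 2 * p) / 2) ^ 2) :
    connectedComponentIn (cthickening ε (cantorS₁ p '' cantorSquare C) ∩
        cthickening ε (cantorS₂ p '' cantorSquare C)) !₂[1 / 2, p * (1 - p ^ i)] ≠
      connectedComponentIn (cthickening ε (cantorS₁ p '' cantorSquare C) ∩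
        cthickening ε (cantorS₂ p '' cantorSquare C)) !₂[1 / 2, p * (1 - p ^ j)] := by
  have hsub : C ⊆ Icc 0 1 := fun x hx => ⟨hC₀.2 hx, hC₁.2 hx⟩
  have hmem : ∀ k : ℕ, !₂[1 / 2, p * (1 - p ^ k)] ∈
      cthickening ε (cantorS₁ p '' cantorSquare C) ∩
        cthickening ε (cantorS₂ p '' cantorSquare C) := fun k =>
    mem_cthickening_inter_of_mem hp.le hC₀.1 hC₁.1 hε₁ (one_sub_pow_mem_of_selfSimilar hC₀.1 hC k)
  have hpj : p ^ j ≤ p * p ^ i := by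
    rw [← pow_succ']; exact pow_le_pow_of_le_one hp₀.le (by linarith) hij
  have hpn : p ^ n ≤ p ^ (i + 1) := pow_le_pow_of_le_one hp₀.le (by linarith) (by omega)
  have hpi : 0 ≤ p ^ i := by positivity
  refine connectedComponentIn_ne_of_forall_ne (f := fun z => z 1) (c := p * (1 - p ^ i / 2))
    (PiLp.continuous_apply 2 _ 1).continuousOn (hmem i) (hmem j) ?_ ?_ ?_
  · exact mul_le_mul_of_nonneg_left (by linarith) hp₀.le
  · exact mul_le_mul_of_nonneg_left (by nlinarith) hp₀.le
  · intro z hz hzc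
    have h_upper := sq_infDist_image_add_sq_le hp₀.le hp.le hcpt hsub (by linarith) hz
    have h_lower := pow_succ_mul_le_infDist_image hp₀.le (by linarith) ⟨0, hC₀.1⟩ hsub hC i
    rw [hzc] at h_upper
    have h_gap : p ^ n * (1 - 2 * p) / 2 ≤ infDist (p * (1 - p ^ i / 2)) ((fun x => p * x) '' C) :=
      h_lower.trans' (by gcongr; linarith)
    have hg : 0 ≤ p ^ n * (1 - 2 * p) / 2 := by have := pow_nonneg hp₀.le n; nlinarith
    nlinarith [pow_le_pow_left₀ hg h_gap 2]

end CantorCopies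

/-- For every `n` there is `u > g/2` such that for every `ε ∈ (g/2, u)` the
intersection `(S₁F)_ε ∩ (S₂F)_ε` contains `n` points lying pairwise in different
connected components; in particular the number of connected components of the
intersection is unbounded as `ε ↘ g/2`. -/
theorem stmt13 (p : ℝ) (hp : p ∈ Set.Ioo (0 : ℝ) (1 / 2))
    (C : Set ℝ) (hCne : C.Nonempty) (hCcpt : IsCompact C)
    (hC : C = (fun x => p * x) '' C ∪ (fun x => p * x + (1 - p)) '' C)
    (n : ℕ) :
    ∃ u : ℝ, (1 - 2 * p) / 2 < u ∧
      ∀ ε ∈ Set.Ioo ((1 - 2 * p) / 2) u,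
        ∃ pts : Fin n → EuclideanSpace ℝ (Fin 2),
          (∀ i, pts i ∈ cthickening ε (cantorS₁ p '' cantorSquare C) ∩
              cthickening ε (cantorS₂ p '' cantorSquare C)) ∧
          ∀ i j, i ≠ j →
            connectedComponentIn
              (cthickening ε (cantorS₁ p '' cantorSquare C) ∩
                cthickening ε (cantorS₂ p '' cantorSquare C)) (pts i) ≠
            connectedComponentIn
              (cthickening ε (cantorS₁ p '' cantorSquare C) ∩
                cthickening ε (cantorS₂ p '' cantorSquare C)) (pts j) := by
  obtain ⟨hp₀, hp⟩ := hp
  have hC₀ := isLeast_zero_of_selfSimilar hp₀.le (by linarith) hCne hCcpt hC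
  have hC₁ := isGreatest_one_of_selfSimilar hp₀.le (by linarith) hCne hCcpt hC
  have hg : 0 < 1 - 2 * p := by linarith
  have hβ : 0 < p ^ n * (1 - 2 * p) / 2 := by positivity
  refine ⟨√(((1 - 2 * p) / 2) ^ 2 + (p ^ n * (1 - 2 * p) / 2) ^ 2),
    (Real.lt_sqrt (by positivity)).2 (by nlinarith), fun ε ⟨hε₁, hε₂⟩ => ?_⟩
  rw [Real.lt_sqrt (by linarith)] at hε₂
  refine ⟨fun i => !₂[1 / 2, p * (1 - p ^ (i : ℕ))], fun i =>
    mem_cthickening_inter_of_mem hp.le hC₀.1 hC₁.1 hε₁.le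
      (one_sub_pow_mem_of_selfSimilar hC₀.1 hC i),
    fun i j hij => ?_⟩
  rcases lt_or_gt_of_ne (Fin.val_ne_of_ne hij) with h | h
  · exact connectedComponentIn_cthickening_inter_ne hp₀ hp hCcpt hC₀ hC₁ hC h j.isLt hε₁.le hε₂
  · exact (connectedComponentIn_cthickening_inter_ne hp₀ hp hCcpt hC₀ hC₁ hC h i.isLt hε₁.le
      hε₂).symm
end
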